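/- arXiv:2008.03075 — 10 statements merged into one kernel-verified Lean document; each statement's English description precedes it below -/
import Mathlib

section
/- The lower pseudo-inverse of the staircase function F(t) = b·⌈t/τ⌉ (with b > 0, τ > 0) satisfies F↓(x) = τ·⌈(x − b)/b⌉ for x > 0, and F↓(0) = 0. -/
/-- The lower pseudo-inverse of the staircase function `F t = b ⌈t/τ⌉`
(with `b > 0`, `τ > 0`) satisfies `F↓(x) = τ ⌈(x-b)/b⌉` for `x > 0`,
and `F↓(0) = 0`. -/
theorem stmt_2 (b τ : ℝ) (hb : 0 < b) (hτ : 0 < τ)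
    (F : ℝ → ℝ) (hF : ∀ t : ℝ, 0 ≤ t → F t = b * (⌈t / τ⌉ : ℤ)) :
    (∀ x : ℝ, 0 < x →
      sInf {s : ℝ | 0 ≤ s ∧ x ≤ F s} = τ * (⌈(x - b) / b⌉ : ℤ)) ∧
    sInf {s : ℝ | 0 ≤ s ∧ (0 : ℝ) ≤ F s} = 0 := by
  constructor
  · intro x hx
    set n : ℤ := ⌈x / b⌉ with hn
    have hn1 : 1 ≤ n := Int.one_le_ceil_iff.mpr (div_pos hx hb)
    have hceil : (⌈(x - b) / b⌉ : ℤ) = n - 1 := by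
      have h : (x - b) / b = x / b - ((1:ℤ):ℝ) := by push_cast; field_simp
      rw [h, Int.ceil_sub_intCast]
    rw [hceil]
    have hset : {s : ℝ | 0 ≤ s ∧ x ≤ F s} = Set.Ioi (τ * ((n - 1 : ℤ) : ℝ)) := by
      ext s
      simp only [Set.mem_setOf_eq, Set.mem_Ioi]
      constructor
      · rintro ⟨hs0, hsx⟩
        rw [hF s hs0] at hsx
        have h1 : x / b ≤ ((⌈s/τ⌉ : ℤ) : ℝ) := (div_le_iff₀ hb).mpr (by linarith)
        have h2 : n ≤ ⌈s/τ⌉ := Int.ceil_le.mpr h1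
        have h3 : ((n - 1 : ℤ) : ℝ) < s / τ := Int.lt_ceil.mp (by omega)
        have := (lt_div_iff₀ hτ).mp h3
        nlinarith
      · intro hs
        have hnn : (0:ℝ) ≤ ((n - 1 : ℤ) : ℝ) := by exact_mod_cast (by omega : (0:ℤ) ≤ n - 1)
        have hs0 : 0 ≤ s := le_of_lt (lt_of_le_of_lt (mul_nonneg hτ.le hnn) hs)
        refine ⟨hs0, ?_⟩
        rw [hF s hs0]
        have h3 : ((n - 1 : ℤ) : ℝ) < s / τ := by
          rw [lt_div_iff₀ hτ]; nlinarith
        have h2 : n ≤ ⌈s/τ⌉ := by have := Int.lt_ceil.mpr h3; omega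
        have hxn : x ≤ b * n := by
          have := Int.le_ceil (x/b)
          rw [← hn] at this
          have := (div_le_iff₀ hb).mp this
          nlinarith
        have h2r : (n:ℝ) ≤ ((⌈s/τ⌉ : ℤ) : ℝ) := by exact_mod_cast h2
        nlinarith
    rw [hset, csInf_Ioi]
  · apply le_antisymm
    · exact csInf_le ⟨0, fun s hs => hs.1⟩ ⟨le_refl 0, by rw [hF 0 le_rfl]; simp⟩
    · exact le_csInf ⟨0, le_refl 0, by rw [hF 0 le_rfl]; simp⟩ fun s hs => hs.1
end

section
/- Let A₁ ≤ ... ≤ A_N be nondecreasing source times and E₁, ..., E_N exit times, and set D_n = max_{k ≤ n} E_k. Then the jitter of D equals at most the jitter of E: max_n(D_n − A_n) − min_n(D_n − A_n) ≤ max_n(E_n − A_n) − min_n(E_n − A_n), and moreover min_n(D_n − A_n) ≥ min_n(E_n − A_n). (Re-sequencing is 'for free' in a lossless network.) -/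
open Finset

/-- Departure time from a lossless re-sequencing buffer: `D n = max_{k ≤ n} E k`. -/
noncomputable def cummax {N : ℕ} (E : Fin N → ℝ) (n : Fin N) : ℝ :=
  (univ.filter (fun k => k ≤ n)).sup' ⟨n, by simp⟩ E

lemma le_cummax {N : ℕ} (E : Fin N → ℝ) (n : Fin N) : E n ≤ cummax E n :=
  Finset.le_sup' E (by simp)

/-- Re-sequencing is for free in the lossless case: with `D n = max_{k ≤ n} E k`,
the jitter of `D` (w.r.t. nondecreasing source times `A`) is at most that of `E`,
and the best-case delay is not decreased. -/
theorem stmt_7 {N : ℕ} [NeZero N] (A E : Fin N → ℝ) (hA : Monotone A) :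
    univ.sup' univ_nonempty (fun n => cummax E n - A n) -
        univ.inf' univ_nonempty (fun n => cummax E n - A n) ≤
      univ.sup' univ_nonempty (fun n => E n - A n) -
        univ.inf' univ_nonempty (fun n => E n - A n) ∧
    univ.inf' univ_nonempty (fun n => E n - A n) ≤
      univ.inf' univ_nonempty (fun n => cummax E n - A n) := by
  set S := univ.sup' univ_nonempty (fun n => E n - A n) with hS
  have hinf : univ.inf' univ_nonempty (fun n => E n - A n) ≤
      univ.inf' univ_nonempty (fun n => cummax E n - A n) := by
    apply Finset.le_inf'
    intro n _
    calc univ.inf' univ_nonempty (fun n => E n - A n) ≤ E n - A n :=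
          Finset.inf'_le _ (mem_univ n)
      _ ≤ cummax E n - A n := by linarith [le_cummax E n]
  refine ⟨?_, hinf⟩
  have hsup : univ.sup' univ_nonempty (fun n => cummax E n - A n) ≤ S := by
    apply Finset.sup'_le
    intro n _
    rw [sub_le_iff_le_add, cummax]
    apply Finset.sup'_le
    intro k hk
    have hkn : k ≤ n := by simpa using hk
    have h1 : E k - A k ≤ S := Finset.le_sup' (fun n => E n - A n) (mem_univ k)
    have h2 : A k ≤ A n := hA hkn
    linarith
  linarith
end

section
/- Consider a re-sequencing buffer whose departure times satisfy, for n ≥ 2, D_n = max(min(D_{n−1}, T + min_{j ≥ n} E_j), E_n) and D₁ = E₁ (all E_n finite or +∞, possibly with losses E_n = +∞). Then for every n with E_n < +∞, D_n ≤ E_n + T, i.e., the delay added by the re-sequencing buffer is at most the timeout T. -/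
open Finset

/-- The delay added by a re-sequencing buffer with timeout `T` is at most `T`:
with `D₁ = E₁` and `D n = max (min (D (n-1), T + min_{j ≥ n} E j)) (E n)`,
any received packet (`E n ≠ ⊤`) satisfies `D n ≤ E n + T`. -/
theorem stmt_8 (N : ℕ) (hN : 1 ≤ N) (E : ℕ → EReal) (T : ℝ) (hT : 0 ≤ T)
    (D : ℕ → EReal)
    (hD1 : D 1 = E 1)
    (hDn : ∀ n, 2 ≤ n → ∀ hn : n ≤ N,
      D n = max (min (D (n - 1))
        ((T : EReal) + (Finset.Icc n N).inf' (Finset.nonempty_Icc.mpr hn) E)) (E n)) :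
    ∀ n, 1 ≤ n → n ≤ N → E n ≠ ⊤ → D n ≤ E n + (T : EReal) := by
  intro n h1 hn hEn
  have hT' : (0 : EReal) ≤ (T : EReal) := by exact_mod_cast hT
  have hself : E n ≤ E n + (T : EReal) := le_add_of_nonneg_right hT'
  rcases eq_or_lt_of_le h1 with h | h
  · rw [← h, hD1]
    exact le_add_of_nonneg_right hT'
  · have h2 : 2 ≤ n := h
    rw [hDn n h2 hn]
    apply max_le _ hself
    apply le_trans (min_le_right _ _)
    have hmem : n ∈ Finset.Icc n N := Finset.mem_Icc.mpr ⟨le_refl n, hn⟩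
    have := Finset.inf'_le E hmem
    calc (T : EReal) + (Finset.Icc n N).inf' (Finset.nonempty_Icc.mpr hn) E
        ≤ (T : EReal) + E n := add_le_add_right this _
      _ = E n + (T : EReal) := add_comm _ _
end

section
/- Let E₁, ..., E_N be finite exit times with RTO λ, meaning E_k ≤ E_j + λ whenever k ≤ j. If T ≥ λ and departures obey D₁ = E₁ and D_n = max(min(D_{n−1}, T + min_{j ≥ n} E_j), E_n) for n ≥ 2, then D_n = max_{k ≤ n} E_k for all n. -/
open Finset

/-- If the timeout `T` is at least the RTO `λ` and there are no losses, then the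
re-sequencing buffer recursion gives `D n = max_{k ≤ n} E k`. -/
theorem stmt_9 (N : ℕ) (hN : 1 ≤ N) (E : ℕ → ℝ) (lam T : ℝ)
    (hrto : ∀ k j, 1 ≤ k → k ≤ j → j ≤ N → E k ≤ E j + lam)
    (hT : lam ≤ T)
    (D : ℕ → ℝ)
    (hD1 : D 1 = E 1)
    (hDn : ∀ n, 2 ≤ n → ∀ hn : n ≤ N,
      D n = max (min (D (n - 1))
        (T + (Finset.Icc n N).inf' (Finset.nonempty_Icc.mpr hn) E)) (E n)) :
    ∀ n, ∀ h1 : 1 ≤ n, n ≤ N →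
      D n = (Finset.Icc 1 n).sup' (Finset.nonempty_Icc.mpr h1) E := by
  intro n
  induction n with
  | zero => intro h1; omega
  | succ m ih =>
    intro h1 hnN
    rcases Nat.eq_or_lt_of_le h1 with h | h
    · have hm0 : m = 0 := by omega
      subst hm0
      simp [hD1]
    · have h2 : 2 ≤ m + 1 := h
      rw [hDn (m + 1) h2 hnN]
      have hm1 : 1 ≤ m := by omega
      have hpred : m + 1 - 1 = m := rfl
      rw [hpred, ih hm1 (by omega)]
      have hmin : min ((Finset.Icc 1 m).sup' (Finset.nonempty_Icc.mpr hm1) E)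
          (T + (Finset.Icc (m+1) N).inf' (Finset.nonempty_Icc.mpr hnN) E)
          = (Finset.Icc 1 m).sup' (Finset.nonempty_Icc.mpr hm1) E := by
        apply min_eq_left
        rw [Finset.sup'_le_iff]
        intro k hk
        simp only [Finset.mem_Icc] at hk
        rw [le_add_iff_nonneg_left] at *
        have : ∀ j ∈ Finset.Icc (m+1) N, E k - T ≤ E j := by
          intro j hj
          simp only [Finset.mem_Icc] at hj
          have := hrto k j hk.1 (by omega) hj.2
          linarith
        have := Finset.le_inf' (Finset.nonempty_Icc.mpr hnN) E this
        linarith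
      rw [hmin]
      have hicc : Finset.Icc 1 (m + 1) = insert (m + 1) (Finset.Icc 1 m) :=
        (Finset.insert_Icc_right_eq_Icc_add_one (by omega)).symm
      simp only [hicc]
      rw [Finset.sup'_insert]
      exact max_comm ((Finset.Icc 1 m).sup' (Finset.nonempty_Icc.mpr hm1) E) (E (m + 1))
end

section
/- Suppose packets have arrival times A_n to a system satisfying the arrival-curve inequality A_n − A_m ≥ α↓(Σ_{k=m}^{n} l_k) for all m ≤ n, where l_k ≥ L_min > 0, and exit times E_n with jitter bound V: (E_m − A_m) − (E_n − A_n) ≤ V for all m, n. Then for all m < n, E_m − E_n ≤ max(V − α↓(2·L_min), 0); consequently the RTO of the flow through the system is at most [V − α↓(2L_min)]⁺. -/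
open Finset

/-- RTO bound for a single system: with arrival-curve constraint
`A n - A m ≥ α↓(Σ_{k=m}^n l k)`, packet sizes at least `Lmin`, and jitter bound
`V`, any two packets `m < n` satisfy `E m - E n ≤ max (V - α↓(2 Lmin)) 0`. -/
theorem stmt_10 (N : ℕ) (A E : Fin N → ℝ) (hA : Monotone A)
    (l : Fin N → ℝ) (Lmin : ℝ) (hLmin : 0 < Lmin) (hl : ∀ k, Lmin ≤ l k)
    (αd : ℝ → ℝ) (hαd : Monotone αd)
    (harr : ∀ m n : Fin N, m ≤ n → αd (∑ k ∈ Finset.Icc m n, l k) ≤ A n - A m)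
    (V : ℝ) (hV : 0 ≤ V)
    (hjit : ∀ m n : Fin N, (E m - A m) - (E n - A n) ≤ V) :
    ∀ m n : Fin N, m < n → E m - E n ≤ max (V - αd (2 * Lmin)) 0 := by
  intro m n hmn
  have hsum : 2 * Lmin ≤ ∑ k ∈ Finset.Icc m n, l k := by
    have hcard : 2 ≤ (Finset.Icc m n).card := by
      rw [Fin.card_Icc]
      omega
    calc 2 * Lmin = (Finset.Icc m n).card • Lmin - ((Finset.Icc m n).card - 2 : ℕ) * Lmin := by
          push_cast
          rw [Nat.cast_sub hcard]
          ring
      _ ≤ (Finset.Icc m n).card • Lmin := by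
          have : 0 ≤ ((Finset.Icc m n).card - 2 : ℕ) * Lmin := by positivity
          linarith
      _ ≤ ∑ k ∈ Finset.Icc m n, l k :=
          Finset.card_nsmul_le_sum _ _ _ (fun k _ => hl k)
  have h1 := harr m n hmn.le
  have h2 := hαd hsum
  have h3 := hjit m n
  have : E m - E n ≤ V - αd (2 * Lmin) := by linarith
  exact le_max_iff.2 (Or.inl this)
end

section
/- Suppose packets have arrival times A_n satisfying the packet-level arrival-curve inequality A_n − A_m ≥ α_pkt↓(n − m + 1) for all m ≤ n, and exit times E_n with jitter bound V. Then for all m < n, E_m − E_n ≤ max(V − α_pkt↓(2), 0), so the RTO through the system is at most [V − α_pkt↓(2)]⁺. -/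
open Finset

/-- RTO bound with a packet-level arrival curve: with
`A n - A m ≥ α_pkt↓(n - m + 1)` and jitter bound `V`, any two packets `m < n`
satisfy `E m - E n ≤ max (V - α_pkt↓(2)) 0`. -/
theorem stmt_11 (N : ℕ) (A E : Fin N → ℝ) (hA : Monotone A)
    (αpd : ℝ → ℝ) (hαpd : Monotone αpd)
    (harr : ∀ m n : Fin N, m ≤ n →
      αpd (((n : ℕ) : ℝ) - ((m : ℕ) : ℝ) + 1) ≤ A n - A m)
    (V : ℝ) (hV : 0 ≤ V)
    (hjit : ∀ m n : Fin N, (E m - A m) - (E n - A n) ≤ V) :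
    ∀ m n : Fin N, m < n → E m - E n ≤ max (V - αpd 2) 0 := by
  intro m n hmn
  have h1 := harr m n hmn.le
  have h2 : (2 : ℝ) ≤ ((n : ℕ) : ℝ) - ((m : ℕ) : ℝ) + 1 := by
    have : (m : ℕ) + 1 ≤ (n : ℕ) := hmn
    have := Nat.cast_le (α := ℝ).mpr this
    push_cast at this ⊢
    linarith
  have h3 : αpd 2 ≤ A n - A m := le_trans (hαpd h2) h1
  have h4 := hjit m n
  have : E m - E n ≤ V - αpd 2 := by linarith
  exact le_trans this (le_max_left _ _)
end

section
/- Under the hypotheses: A_n − A_m ≥ α↓(Σ_{k=m}^{n} l_k) for all m ≤ n (arrival curve with lower pseudo-inverse α↓ satisfying the implication α↓(y) < x ⟹ y ≤ α(x)), packet sizes l_k ≥ L_min, and jitter bound (E_m − A_m) − (E_n − A_n) ≤ V for all m, n: for every m, the reordering byte offset π_m = Σ_{k > m, E_k < E_m} l_k satisfies π_m ≤ α(V) − L_min whenever π_m > 0. -/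
open Finset

/-- RBO bound for a single system: under the arrival-curve constraint expressed
via the lower pseudo-inverse `α↓` (with `α↓ y < x → y ≤ α x`), packet sizes at
least `Lmin`, and jitter bound `V`, any packet `m` with positive reordering byte
offset `π m = Σ_{k > m, E k < E m} l k` satisfies `π m ≤ α V - Lmin`. -/
theorem stmt_12 (N : ℕ) (A E : Fin N → ℝ) (hA : Monotone A)
    (l : Fin N → ℝ) (Lmin Lmax : ℝ) (hLmin : 0 < Lmin)
    (hl : ∀ k, Lmin ≤ l k ∧ l k ≤ Lmax)
    (α αd : ℝ → ℝ) (hα : Monotone α) (hαd : Monotone αd)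
    (hinv : ∀ x y : ℝ, αd y < x → y ≤ α x)
    (harr : ∀ m n : Fin N, m ≤ n → αd (∑ k ∈ Finset.Icc m n, l k) ≤ A n - A m)
    (V : ℝ) (hV : 0 ≤ V)
    (hjit : ∀ m n : Fin N, (E m - A m) - (E n - A n) ≤ V) :
    ∀ m : Fin N,
      0 < ∑ k ∈ univ.filter (fun k => m < k ∧ E k < E m), l k →
      ∑ k ∈ univ.filter (fun k => m < k ∧ E k < E m), l k ≤ α V - Lmin := by
  intro m hpos
  set S := univ.filter (fun k => m < k ∧ E k < E m) with hS
  have hSne : S.Nonempty := by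
    by_contra h
    rw [Finset.not_nonempty_iff_eq_empty] at h
    rw [hS] at hpos
    rw [← hS, h, Finset.sum_empty] at hpos
    exact lt_irrefl 0 hpos
  obtain ⟨n, hnS, hnmax⟩ := S.exists_max_image id hSne
  have hn : m < n ∧ E n < E m := by
    have := Finset.mem_filter.mp hnS
    exact this.2
  have hmn : m ≤ n := le_of_lt hn.1
  have hsub : insert m S ⊆ Finset.Icc m n := by
    intro k hk
    rcases Finset.mem_insert.mp hk with rfl | hkS
    · exact Finset.mem_Icc.mpr ⟨le_refl _, hmn⟩
    · have hk' := (Finset.mem_filter.mp hkS).2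
      exact Finset.mem_Icc.mpr ⟨le_of_lt hk'.1, hnmax k hkS⟩
  have hmnotS : m ∉ S := by
    intro h
    exact lt_irrefl m (Finset.mem_filter.mp h).2.1
  have hsum1 : l m + ∑ k ∈ S, l k ≤ ∑ k ∈ Finset.Icc m n, l k := by
    rw [← Finset.sum_insert hmnotS]
    apply Finset.sum_le_sum_of_subset_of_nonneg hsub
    intro k _ _
    exact le_of_lt (lt_of_lt_of_le hLmin (hl k).1)
  have hlt : A n - A m < V := by
    have := hjit m n
    have hE := hn.2
    linarith
  have hαdlt : αd (∑ k ∈ Finset.Icc m n, l k) < V := lt_of_le_of_lt (harr m n hmn) hlt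
  have hbound := hinv V _ hαdlt
  have := (hl m).1
  linarith
end

section
/- Concatenation RTO bound: Let a flow pass through systems S_s, S_{s+1}, ..., S_K with exit times E^h_n after system S_h. Assume that at the input of S_s the packets are in order (E^{s−1}_m ≤ E^{s−1}_n for m ≤ n), S_s has RTO bound λ_s (whenever packets m < n enter S_s in order, E^s_m − E^s_n ≤ λ_s), and each subsequent S_h (h > s) has jitter bound V_h: (E^h_m − E^{h−1}_m) − (E^h_n − E^{h−1}_n) ≤ V_h for all m, n. Then for all m < n, E^K_m − E^K_n ≤ λ_s + Σ_{h=s+1}^{K} V_h, i.e., the end-to-end RTO is at most λ_s + Σ_{h=s+1}^{K} V_h. -/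
open Finset

/-- Concatenation RTO bound: if packets enter `S_s` in order, `S_s` has RTO
bound `λ_s`, and each downstream system `S_h` (`s < h ≤ K`) has jitter bound
`V h`, then for all packets `m < n`,
`E^K m - E^K n ≤ λ_s + Σ_{h=s+1}^K V h`. -/
theorem stmt_14 (s K : ℕ) (hs : 1 ≤ s) (hsK : s ≤ K)
    (E : ℕ → ℕ → ℝ) (lams : ℝ) (hlams : 0 ≤ lams)
    (V : ℕ → ℝ) (hV : ∀ h, 0 ≤ V h)
    (h_in_order : ∀ m n : ℕ, m ≤ n → E (s - 1) m ≤ E (s - 1) n)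
    (h_rto_s : ∀ m n : ℕ, m < n → E (s - 1) m ≤ E (s - 1) n →
      E s m - E s n ≤ lams)
    (h_jitter : ∀ h, s + 1 ≤ h → h ≤ K → ∀ m n : ℕ,
      (E h m - E (h - 1) m) - (E h n - E (h - 1) n) ≤ V h) :
    ∀ m n : ℕ, m < n →
      E K m - E K n ≤ lams + ∑ h ∈ Finset.Icc (s + 1) K, V h := by
  intro m n hmn
  -- strengthen: for all k, s ≤ k → k ≤ K → bound
  suffices H : ∀ k, s ≤ k → k ≤ K → E k m - E k n ≤ lams + ∑ h ∈ Finset.Icc (s + 1) k, V h from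
    H K hsK le_rfl
  intro k hk
  induction k, hk using Nat.le_induction with
  | base =>
    intro _
    simp [Finset.Icc_eq_empty_of_lt (Nat.lt_succ_self s)]
    linarith [h_rto_s m n hmn (h_in_order m n hmn.le)]
  | succ k hk ih =>
    intro hkK
    have hkK' : k ≤ K := Nat.le_of_succ_le hkK
    have h1 := h_jitter (k + 1) (by omega) hkK m n
    simp only [Nat.add_sub_cancel] at h1
    have h2 := ih hkK'
    rw [Finset.sum_Icc_succ_top (by omega)]
    linarith
end

section
/- In the recursion D₁ = E₁, D_n = max(min(D_{n−1}, T + min_{j ≥ n} E_j), E_n) for a re-sequencing buffer, if all E_n are finite and the RTO constraint E_k ≤ E_j + T holds for all k ≤ j (i.e., timeout T is at least the RTO), then the departure sequence D_n is nondecreasing in n (in-order delivery without discards). -/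
open Finset

/-- If the timeout `T` is at least the RTO (`E k ≤ E j + T` for `k ≤ j`) and
there are no losses, the re-sequencing buffer recursion yields nondecreasing
departure times (in-order delivery without discards). -/
theorem stmt_15 (N : ℕ) (hN : 1 ≤ N) (E : ℕ → ℝ) (T : ℝ) (hT : 0 ≤ T)
    (hrto : ∀ k j, 1 ≤ k → k ≤ j → j ≤ N → E k ≤ E j + T)
    (D : ℕ → ℝ)
    (hD1 : D 1 = E 1)
    (hDn : ∀ n, 2 ≤ n → ∀ hn : n ≤ N,
      D n = max (min (D (n - 1))
        (T + (Finset.Icc n N).inf' (Finset.nonempty_Icc.mpr hn) E)) (E n)) :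
    ∀ n, 2 ≤ n → n ≤ N → D (n - 1) ≤ D n := by
  have key : ∀ k, 1 ≤ k → k ≤ N → ∀ j, k ≤ j → j ≤ N → D k ≤ T + E j := by
    intro k
    induction k with
    | zero => omega
    | succ m ih =>
      intro hk hkN j hkj hjN
      rcases Nat.eq_zero_or_pos m with hm | hm
      · subst hm
        rw [hD1]
        have := hrto 1 j (le_refl 1) hkj hjN
        linarith
      · have h2 : 2 ≤ m + 1 := by omega
        rw [hDn (m + 1) h2 hkN]
        have hinf : (Finset.Icc (m + 1) N).inf'
            (Finset.nonempty_Icc.mpr hkN) E ≤ E j :=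
          Finset.inf'_le _ (Finset.mem_Icc.mpr ⟨hkj, hjN⟩)
        have hE : E (m + 1) ≤ E j + T := hrto (m + 1) j hk hkj hjN
        apply max_le
        · calc min (D (m + 1 - 1)) (T + (Finset.Icc (m + 1) N).inf'
              (Finset.nonempty_Icc.mpr hkN) E)
              ≤ T + (Finset.Icc (m + 1) N).inf'
                (Finset.nonempty_Icc.mpr hkN) E := min_le_right _ _
            _ ≤ T + E j := by linarith
        · linarith
  intro n h2 hnN
  rw [hDn n h2 hnN]
  have hprev : D (n - 1) ≤ T + (Finset.Icc n N).inf'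
      (Finset.nonempty_Icc.mpr hnN) E := by
    have hle : D (n - 1) - T ≤ (Finset.Icc n N).inf'
        (Finset.nonempty_Icc.mpr hnN) E := by
      apply Finset.le_inf'
      intro j hj
      have hj' := Finset.mem_Icc.mp hj
      have := key (n - 1) (by omega) (by omega) j (by omega) hj'.2
      linarith
    linarith
  have : min (D (n - 1)) (T + (Finset.Icc n N).inf'
      (Finset.nonempty_Icc.mpr hnN) E) = D (n - 1) := min_eq_left hprev
  rw [this]
  exact le_max_left _ _
end

section
/- Worst-case delay increase in the lossy case: with the re-sequencing recursion D_n = max(min(D_{n−1}, T + min_{j ≥ n} E_j), E_n), D₁ = E₁, over E_n ∈ ℝ ∪ {+∞}, and with nondecreasing source times A_n, if δ_max bounds E_n − A_n for all received packets (E_n < +∞), then D_n − A_n ≤ δ_max + T for all received packets, i.e., the re-sequencing buffer increases the worst-case delay by at most T. -/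
open Finset

/-- Worst-case delay increase in the lossy case: with the re-sequencing
recursion over `ℝ ∪ {+∞}` and nondecreasing source times `A`, if
`E n - A n ≤ δ_max` for all received packets, then `D n - A n ≤ δ_max + T`
for all received packets. -/
theorem stmt_19 (N : ℕ) (hN : 1 ≤ N) (A : ℕ → ℝ) (hA : Monotone A)
    (E : ℕ → EReal) (T δmax : ℝ) (hT : 0 ≤ T)
    (D : ℕ → EReal)
    (hD1 : D 1 = E 1)
    (hDn : ∀ n, 2 ≤ n → ∀ hn : n ≤ N,
      D n = max (min (D (n - 1))
        ((T : EReal) + (Finset.Icc n N).inf' (Finset.nonempty_Icc.mpr hn) E)) (E n))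
    (hδ : ∀ n, 1 ≤ n → n ≤ N → E n ≠ ⊤ → E n ≤ ((A n + δmax : ℝ) : EReal)) :
    ∀ n, 1 ≤ n → n ≤ N → E n ≠ ⊤ →
      D n ≤ ((A n + δmax + T : ℝ) : EReal) := by
  intro n hn1 hnN hnE
  have hE : E n ≤ ((A n + δmax : ℝ) : EReal) := hδ n hn1 hnN hnE
  have hcast : ((A n + δmax + T : ℝ) : EReal) = (T : EReal) + ((A n + δmax : ℝ) : EReal) := by
    push_cast; exact add_comm _ _
  have hE' : E n ≤ ((A n + δmax + T : ℝ) : EReal) := by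
    refine hE.trans ?_
    rw [hcast]
    have : (0 : EReal) + ((A n + δmax : ℝ) : EReal) ≤ (T : EReal) + ((A n + δmax : ℝ) : EReal) := by
      exact add_le_add_left (by exact_mod_cast hT) _
    simpa using this
  rcases eq_or_lt_of_le hn1 with h1 | h2
  · subst h1
    rw [hD1]
    exact hE'
  · have h2 : 2 ≤ n := h2
    rw [hDn n h2 hnN]
    refine max_le ?_ hE'
    refine (min_le_right _ _).trans ?_
    rw [hcast]
    refine add_le_add_right ?_ _
    exact (Finset.inf'_le E (Finset.mem_Icc.mpr ⟨le_refl n, hnN⟩)).trans hE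
end
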